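/- arXiv:2210.00264 — 4 statements merged into one kernel-verified Lean document; each statement's English description precedes it below -/
import Mathlib

section
/- Soundness of a single sumcheck round: let f: F^ℓ → F be a polynomial of degree at most d in each variable, and suppose H ≠ Σ_{b ∈ {0,1}^ℓ} f(b). If a prover sends any univariate polynomial g of degree ≤ d with g(0) + g(1) = H, then for a uniformly random r_1 ∈ F, the probability that g(r_1) = Σ_{b ∈ {0,1}^{ℓ-1}} f(r_1, b) is at most d/|F|. -/
/-- Soundness of a single sumcheck round: if `H` is not the true sum of `f` over
the Boolean hypercube and the prover sends a degree-`≤ d` univariate polynomial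
`g` with `g(0) + g(1) = H`, then `g` agrees with the honest round polynomial at
a uniformly random `r₁` with probability at most `d / |F|`. -/
theorem stmt8 {F : Type*} [Field F] [Fintype F] [DecidableEq F] {m d : ℕ}
    (f : MvPolynomial (Fin (m + 1)) F) (hf : ∀ i, f.degreeOf i ≤ d) (H : F)
    (hH : H ≠ ∑ b : Fin (m + 1) → Bool,
      MvPolynomial.eval (fun k => if b k then (1 : F) else 0) f)
    (g : Polynomial F) (hg : g.degree ≤ d) (hgH : g.eval 0 + g.eval 1 = H) :
    ((Finset.univ.filter fun r : F => g.eval r =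
        ∑ b : Fin m → Bool,
          MvPolynomial.eval (Fin.cons r fun k => if b k then (1 : F) else 0) f).card : ℝ)
      / (Fintype.card F : ℝ) ≤ (d : ℝ) / (Fintype.card F : ℝ) := by
  classical
  set e := MvPolynomial.finSuccEquiv F m f with he
  set h : Polynomial F := ∑ b : Fin m → Bool,
      Polynomial.map (MvPolynomial.eval (fun k => if b k then (1:F) else 0)) e with hh
  have hcons : ∀ (b0 : Bool) (bt : Fin m → Bool),
      (fun k => if (Fin.cons b0 bt : Fin (m+1) → Bool) k then (1:F) else 0)
        = Fin.cons (if b0 then (1:F) else 0) (fun k => if bt k then (1:F) else 0) := by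
    intro b0 bt
    funext k
    refine Fin.cases ?_ (fun i => ?_) k <;> simp
  have heval : ∀ r : F, h.eval r = ∑ b : Fin m → Bool,
      MvPolynomial.eval (Fin.cons r fun k => if b k then (1:F) else 0) f := by
    intro r
    rw [hh, Polynomial.eval_finset_sum]
    refine Finset.sum_congr rfl fun b _ => ?_
    rw [MvPolynomial.eval_eq_eval_mv_eval']
  have hsum : h.eval 0 + h.eval 1 = ∑ b : Fin (m + 1) → Bool,
      MvPolynomial.eval (fun k => if b k then (1 : F) else 0) f := by
    rw [heval 0, heval 1, ← Finset.sum_add_distrib]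
    have key := Fintype.sum_equiv (Fin.consEquiv (fun _ : Fin (m+1) => Bool))
      (fun p : Bool × (Fin m → Bool) =>
        MvPolynomial.eval (fun k => if (Fin.cons p.1 p.2 : Fin (m+1) → Bool) k then (1:F) else 0) f)
      (fun b => MvPolynomial.eval (fun k => if b k then (1:F) else 0) f)
      (fun p => rfl)
    rw [← key, Fintype.sum_prod_type, Fintype.sum_bool, ← Finset.sum_add_distrib]
    refine Finset.sum_congr rfl fun b _ => ?_
    rw [hcons true b, hcons false b]
    simp [add_comm]
  have hne : g ≠ h := by
    intro hge
    apply hH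
    rw [← hsum, ← hgH, hge]
  have hhdeg : h.degree ≤ (d : WithBot ℕ) := by
    rw [hh]
    refine (Polynomial.degree_sum_le _ _).trans ?_
    refine Finset.sup_le fun b _ => ?_
    refine (Polynomial.degree_map_le).trans ?_
    refine (Polynomial.degree_le_natDegree).trans ?_
    rw [he, MvPolynomial.natDegree_finSuccEquiv]
    exact_mod_cast WithBot.coe_le_coe.2 (hf 0)
  have hp : g - h ≠ 0 := sub_ne_zero.2 hne
  have hcard : (Finset.univ.filter fun r : F => g.eval r =
        ∑ b : Fin m → Bool,
          MvPolynomial.eval (Fin.cons r fun k => if b k then (1 : F) else 0) f).card ≤ d := by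
    have hsub : (Finset.univ.filter fun r : F => g.eval r =
        ∑ b : Fin m → Bool,
          MvPolynomial.eval (Fin.cons r fun k => if b k then (1 : F) else 0) f)
        ⊆ (g - h).roots.toFinset := by
      intro r hr
      rw [Finset.mem_filter] at hr
      rw [Multiset.mem_toFinset, Polynomial.mem_roots hp]
      simp only [Polynomial.IsRoot, Polynomial.eval_sub, sub_eq_zero]
      rw [heval r]
      exact hr.2
    calc _ ≤ (g - h).roots.toFinset.card := Finset.card_le_card hsub
      _ ≤ Multiset.card (g - h).roots := (g - h).roots.toFinset_card_le
      _ ≤ (g - h).natDegree := (g - h).card_roots' 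
      _ ≤ d := by
          have : (g - h).degree ≤ (d : WithBot ℕ) :=
            (Polynomial.degree_sub_le _ _).trans (max_le hg hhdeg)
          exact Polynomial.natDegree_le_iff_degree_le.2 this
  have hF : (0 : ℝ) < Fintype.card F := by positivity
  gcongr
end

section
/- Soundness of the full sumcheck protocol: if H ≠ Σ_{b∈{0,1}^ℓ} f(b) for a polynomial f of individual degree ≤ d, then for any (possibly dishonest) prover strategy, the probability over the verifier's uniformly random challenges r_1,…,r_ℓ ∈ F that all ℓ round checks and the final check f_ℓ(r_ℓ) = f(r_1,…,r_ℓ) pass is at most dℓ/|F|. -/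
/-!
Let `s_j` be the message of the honest prover in round `j`: the univariate polynomial obtained
from `f` by fixing the coordinates before `j` to the challenges and summing the coordinates after
`j` over `{0,1}`. If every check passes while `H` is not the true sum, then some round `j` has
`g_j ≠ s_j` but `g_j(r_j) = s_j(r_j)`: otherwise the disagreement in round `0` would propagate
round by round to the final oracle check. Once the earlier challenges are fixed, `g_j - s_j` is a
nonzero polynomial of degree at most `d`, so this happens for at most `d` values of `r_j`; a union
bound over the `m + 1` rounds gives `d (m + 1) / |F|`.
-/

open MvPolynomial Finset

theorem Fin.Ioi_castSucc_eq_insert_succ {m : ℕ} (i : Fin m) :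
    Ioi i.castSucc = insert i.succ (Ioi i.succ) := by
  rw [Ioi_insert]
  ext k
  simp [Fin.lt_def, Fin.le_def]

namespace Sumcheck

open Function

section LineRestrict

variable {R σ : Type*} [CommSemiring R] [DecidableEq σ]

noncomputable def lineRestrict (f : MvPolynomial σ R) (a : σ) (p : σ → R) : Polynomial R :=
  aeval (update (Polynomial.C ∘ p) a Polynomial.X) f

theorem eval_lineRestrict (f : MvPolynomial σ R) (a : σ) (p : σ → R) (x : R) :
    (lineRestrict f a p).eval x = eval (update p a x) f := by
  rw [lineRestrict, ← Polynomial.coe_aeval_eq_eval, ← AlgHom.comp_apply, comp_aeval]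
  refine congrArg (fun g => aeval g f) (funext fun k => ?_)
  rcases eq_or_ne k a with rfl | hk <;> simp [*]

theorem lineRestrict_update_self (f : MvPolynomial σ R) (a : σ) (p : σ → R) (x : R) :
    lineRestrict f a (update p a x) = lineRestrict f a p := by
  simp only [lineRestrict, comp_update, update_idem]

theorem natDegree_lineRestrict_le (f : MvPolynomial σ R) (a : σ) (p : σ → R) :
    (lineRestrict f a p).natDegree ≤ f.degreeOf a := by
  set e := Equiv.optionSubtypeNe a
  -- `degreeOf a f` is the degree of `f` as a polynomial in `X a` over the other variables.
  have hline : lineRestrict f a p =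
      (optionEquivLeft R _ (rename e.symm f)).map (eval (p ∘ Subtype.val)) := by
    induction f using MvPolynomial.induction_on with
    | C c => simp [lineRestrict]
    | add f g hf hg => simp only [lineRestrict, map_add, Polynomial.map_add] at *; rw [hf, hg]
    | mul_X f i hf =>
      simp only [lineRestrict, map_mul, Polynomial.map_mul] at *
      rw [hf]
      rcases eq_or_ne i a with rfl | hi
      · simp [e, optionEquivLeft_X_none]
      · simp [e, hi, Equiv.optionSubtypeNe_symm_of_ne hi, optionEquivLeft_X_some]
  rw [degreeOf_eq_natDegree, hline]
  exact Polynomial.natDegree_map_le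

end LineRestrict

section Cube

variable {R σ : Type*} [CommSemiring R] [DecidableEq σ]

def cubePoint (s S : Finset σ) (p : σ → R) : σ → R :=
  fun k => if k ∈ S then 1 else if k ∈ s then 0 else p k

/-- Boolean assignments to the coordinates in `s` are encoded by the sets `S ⊆ s` of coordinates
set to `1`. -/
noncomputable def cubeSum (f : MvPolynomial σ R) (s : Finset σ) (p : σ → R) : R :=
  ∑ S ∈ s.powerset, eval (cubePoint s S p) f

theorem cubeSum_empty (f : MvPolynomial σ R) (p : σ → R) : cubeSum f ∅ p = eval p f := by
  have hp : cubePoint (∅ : Finset σ) ∅ p = p := funext fun k => by simp [cubePoint]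
  simp [cubeSum, hp]

theorem cubePoint_update {s S : Finset σ} {a : σ} (ha : a ∉ s) (hS : S ⊆ s) (p : σ → R) (x : R) :
    cubePoint s S (update p a x) = update (cubePoint s S p) a x := by
  have haS : a ∉ S := fun h => ha (hS h)
  funext k
  rcases eq_or_ne k a with rfl | hk
  · simp [cubePoint, ha, haS]
  · simp [cubePoint, hk]

theorem cubeSum_insert (f : MvPolynomial σ R) {s : Finset σ} {a : σ} (ha : a ∉ s) (p : σ → R) :
    cubeSum f (insert a s) p = cubeSum f s (update p a 0) + cubeSum f s (update p a 1) := by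
  rw [cubeSum, sum_powerset_insert ha, cubeSum, cubeSum]
  congr 1 <;> refine sum_congr rfl fun S hS => congrArg (eval · f) (funext fun k => ?_)
  all_goals
    have haS : a ∉ S := fun h => ha (mem_powerset.1 hS h)
    rcases eq_or_ne k a with rfl | hk <;> simp [cubePoint, *]

theorem cubeSum_univ [Fintype σ] (f : MvPolynomial σ R) (p : σ → R) :
    cubeSum f univ p = ∑ b : σ → Bool, eval (fun k => if b k then 1 else 0) f := by
  refine sum_nbij' (fun S k => decide (k ∈ S)) (fun b => univ.filter (b ·)) ?_ ?_ ?_ ?_ ?_ <;>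
    simp only [mem_univ, mem_powerset, subset_univ, implies_true]
  · exact fun S _ => by ext; simp
  · exact fun b _ => by funext k; simp
  · exact fun S _ => congrArg (eval · f) (by funext k; simp [cubePoint])

noncomputable def cubeSumLine (f : MvPolynomial σ R) (s : Finset σ) (a : σ) (p : σ → R) :
    Polynomial R :=
  ∑ S ∈ s.powerset, lineRestrict f a (cubePoint s S p)

theorem eval_cubeSumLine (f : MvPolynomial σ R) {s : Finset σ} {a : σ} (ha : a ∉ s) (p : σ → R)
    (x : R) : (cubeSumLine f s a p).eval x = cubeSum f s (update p a x) := by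
  simp only [cubeSumLine, cubeSum, Polynomial.eval_finsetSum, eval_lineRestrict]
  exact sum_congr rfl fun S hS => by rw [cubePoint_update ha (mem_powerset.1 hS)]

theorem cubeSumLine_update_self (f : MvPolynomial σ R) {s : Finset σ} {a : σ} (ha : a ∉ s)
    (p : σ → R) (x : R) : cubeSumLine f s a (update p a x) = cubeSumLine f s a p := by
  refine sum_congr rfl fun S hS => ?_
  rw [cubePoint_update ha (mem_powerset.1 hS), lineRestrict_update_self]

theorem natDegree_cubeSumLine_le (f : MvPolynomial σ R) (s : Finset σ) (a : σ) (p : σ → R) :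
    (cubeSumLine f s a p).natDegree ≤ f.degreeOf a :=
  Polynomial.natDegree_sum_le_of_forall_le _ _ fun _ _ => natDegree_lineRestrict_le _ _ _

end Cube

open scoped Classical in
theorem card_filter_ne_zero_eval_eq_zero_le {R ι : Type*} [CommRing R] [IsDomain R] [Fintype R]
    [Fintype ι] [DecidableEq ι] (j : ι) (q : (ι → R) → Polynomial R)
    (hq : ∀ r x, q (update r j x) = q r) {d : ℕ} (hd : ∀ r, (q r).natDegree ≤ d) :
    #{r | q r ≠ 0 ∧ (q r).eval (r j) = 0} ≤ d * Fintype.card R ^ (Fintype.card ι - 1) := by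
  set e := Equiv.funSplitAt j R
  have he : ∀ x v, e.symm (x, v) = update (e.symm (0, v)) j x := fun x v => by
    funext k
    rcases eq_or_ne k j with rfl | hk <;> simp [e, *]
  let rootSet v : Finset (ι → R) :=
    (q (e.symm (0, v))).roots.toFinset.image fun x => e.symm (x, v)
  have hsub : ({r | q r ≠ 0 ∧ (q r).eval (r j) = 0} : Finset _) ⊆ univ.biUnion rootSet := by
    intro r hr
    obtain ⟨hne, hroot⟩ := (mem_filter.1 hr).2
    have hr : e.symm (r j, (e r).2) = r := e.symm_apply_apply r
    have hqr : q (e.symm (0, (e r).2)) = q r := by rw [← hq _ (r j), ← he, hr]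
    refine mem_biUnion.2 ⟨(e r).2, mem_univ _, mem_image.2 ⟨r j, ?_, hr⟩⟩
    rw [Multiset.mem_toFinset, hqr, Polynomial.mem_roots hne]
    exact hroot
  have hcard : ∀ v, #(rootSet v) ≤ d := fun v =>
    (card_image_le.trans (Multiset.toFinset_card_le _)).trans
      ((Polynomial.card_roots' _).trans (hd _))
  calc #{r | q r ≠ 0 ∧ (q r).eval (r j) = 0}
      ≤ #(univ.biUnion rootSet) := card_le_card hsub
    _ ≤ ∑ v, #(rootSet v) := card_biUnion_le
    _ ≤ ∑ _v : {i // i ≠ j} → R, d := sum_le_sum fun v _ => hcard v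
    _ = d * Fintype.card R ^ (Fintype.card ι - 1) := by
      simp [mul_comm, Fintype.card_subtype_compl]

section Rounds

variable {R : Type*} [CommSemiring R] {m : ℕ}

/-- The honest prover's message in round `j`; only the coordinates of `r` before `j` matter. -/
noncomputable def honestMessage (f : MvPolynomial (Fin (m + 1)) R) (j : Fin (m + 1))
    (r : Fin (m + 1) → R) : Polynomial R :=
  cubeSumLine f (Ioi j) j r

theorem honestMessage_zero_eval_add (f : MvPolynomial (Fin (m + 1)) R) (r : Fin (m + 1) → R) :
    (honestMessage f 0 r).eval 0 + (honestMessage f 0 r).eval 1 =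
      ∑ b : Fin (m + 1) → Bool, eval (fun k => if b k then 1 else 0) f := by
  rw [honestMessage, eval_cubeSumLine _ notMem_Ioi_self, eval_cubeSumLine _ notMem_Ioi_self,
    ← cubeSum_insert _ notMem_Ioi_self, Ioi_insert, ← bot_eq_zero, Ici_bot, cubeSum_univ]

theorem honestMessage_castSucc_eval (f : MvPolynomial (Fin (m + 1)) R) (r : Fin (m + 1) → R)
    (i : Fin m) :
    (honestMessage f i.castSucc r).eval (r i.castSucc) =
      (honestMessage f i.succ r).eval 0 + (honestMessage f i.succ r).eval 1 := by
  rw [honestMessage, eval_cubeSumLine _ notMem_Ioi_self, update_eq_self,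
    Fin.Ioi_castSucc_eq_insert_succ, cubeSum_insert _ notMem_Ioi_self, honestMessage,
    eval_cubeSumLine _ notMem_Ioi_self, eval_cubeSumLine _ notMem_Ioi_self]

theorem honestMessage_last_eval (f : MvPolynomial (Fin (m + 1)) R) (r : Fin (m + 1) → R) :
    (honestMessage f (Fin.last m) r).eval (r (Fin.last m)) = eval r f := by
  rw [honestMessage, eval_cubeSumLine _ notMem_Ioi_self, update_eq_self, ← Fin.top_eq_last,
    Ioi_top, cubeSum_empty]

theorem honestMessage_update_self (f : MvPolynomial (Fin (m + 1)) R) (j : Fin (m + 1))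
    (r : Fin (m + 1) → R) (x : R) : honestMessage f j (update r j x) = honestMessage f j r :=
  cubeSumLine_update_self f notMem_Ioi_self r x

theorem natDegree_honestMessage_le (f : MvPolynomial (Fin (m + 1)) R) (j : Fin (m + 1))
    (r : Fin (m + 1) → R) : (honestMessage f j r).natDegree ≤ f.degreeOf j :=
  natDegree_cubeSumLine_le f _ j r

end Rounds

theorem exists_ne_eval_eq_of_sumcheck_checks {R : Type*} [CommSemiring R] {m : ℕ}
    (P Q : Fin (m + 1) → Polynomial R) (r : Fin (m + 1) → R)
    (h0 : (P 0).eval 0 + (P 0).eval 1 ≠ (Q 0).eval 0 + (Q 0).eval 1)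
    (hP : ∀ i : Fin m, (P i.castSucc).eval (r i.castSucc) = (P i.succ).eval 0 + (P i.succ).eval 1)
    (hQ : ∀ i : Fin m, (Q i.castSucc).eval (r i.castSucc) = (Q i.succ).eval 0 + (Q i.succ).eval 1)
    (hlast : (P (Fin.last m)).eval (r (Fin.last m)) = (Q (Fin.last m)).eval (r (Fin.last m))) :
    ∃ j, P j ≠ Q j ∧ (P j).eval (r j) = (Q j).eval (r j) := by
  by_contra! hagree
  have hne : ∀ j, P j ≠ Q j := by
    intro j
    induction j using Fin.induction with
    | zero => exact fun h => h0 (by rw [h])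
    | succ i ih => exact fun h => hagree _ ih (by rw [hP, hQ, h])
  exact hagree _ (hne _) hlast

end Sumcheck

open Sumcheck

open scoped Classical in
/-- Soundness of the full sumcheck protocol: if `H` is not the true sum, then for
any (adaptive) prover strategy `g` sending degree-`≤ d` round polynomials, the
probability over uniformly random challenges that all round checks and the final
oracle check pass is at most `d·ℓ / |F|`. -/
theorem stmt10 {F : Type*} [Field F] [Fintype F] {m d : ℕ}
    (f : MvPolynomial (Fin (m + 1)) F) (hf : ∀ i, f.degreeOf i ≤ d) (H : F)
    (hH : H ≠ ∑ b : Fin (m + 1) → Bool, eval (fun k => if b k then (1 : F) else 0) f)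
    (g : (j : Fin (m + 1)) → (Fin j.val → F) → Polynomial F)
    (hg : ∀ j c, (g j c).degree ≤ d) :
    ((Finset.univ.filter fun r : Fin (m + 1) → F =>
        letI pre : (j : Fin (m + 1)) → Fin j.val → F :=
          fun j k => r ⟨k.val, k.isLt.trans j.isLt⟩
        (g 0 (pre 0)).eval 0 + (g 0 (pre 0)).eval 1 = H ∧
        (∀ j : Fin m, (g j.castSucc (pre j.castSucc)).eval (r j.castSucc) =
          (g j.succ (pre j.succ)).eval 0 + (g j.succ (pre j.succ)).eval 1) ∧
        (g (Fin.last m) (pre (Fin.last m))).eval (r (Fin.last m)) = eval r f).card : ℝ)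
      / (Fintype.card F : ℝ) ^ (m + 1) ≤ ((d : ℝ) * (m + 1)) / (Fintype.card F : ℝ) := by
  let q j r : Polynomial F := g j (fun k => r ⟨k.val, k.isLt.trans j.isLt⟩) - honestMessage f j r
  have hq_update : ∀ j r x, q j (Function.update r j x) = q j r := fun j r x => by
    simp only [q, honestMessage_update_self]
    congr 2
    funext k
    exact Function.update_of_ne (Fin.ne_of_lt k.isLt) _ _
  have hq_deg : ∀ j r, (q j r).natDegree ≤ d := fun j r =>
    (Polynomial.natDegree_sub_le _ _).trans <|
      max_le (Polynomial.natDegree_le_of_degree_le (hg _ _))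
        ((natDegree_honestMessage_le f j r).trans (hf j))
  calc _ ≤ (((m + 1) * (d * Fintype.card F ^ m) : ℕ) : ℝ) / (Fintype.card F : ℝ) ^ (m + 1) := by
        gcongr
        refine (card_le_card (t := univ.biUnion fun j => {r | q j r ≠ 0 ∧ (q j r).eval (r j) = 0})
          fun r hr => ?_).trans (card_biUnion_le.trans ?_)
        · obtain ⟨h0, hstep, hlast⟩ := (mem_filter.1 hr).2
          obtain ⟨j, hne, heq⟩ := exists_ne_eval_eq_of_sumcheck_checks
            (fun j => g j (fun k => r ⟨k.val, k.isLt.trans j.isLt⟩)) (honestMessage f · r) r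
            (by rwa [h0, honestMessage_zero_eval_add]) hstep (honestMessage_castSucc_eval f r)
            (by rw [hlast, honestMessage_last_eval])
          exact mem_biUnion.2 ⟨j, mem_univ j, mem_filter.2 ⟨mem_univ r, sub_ne_zero.2 hne,
            by rw [Polynomial.eval_sub, heq, sub_self]⟩⟩
        · calc _ ≤ ∑ _j : Fin (m + 1), d * Fintype.card F ^ m := sum_le_sum fun j _ => by
                simpa using card_filter_ne_zero_eval_eq_zero_le j (q j) (hq_update j) (hq_deg j)
            _ = _ := by simp
    _ = _ := by field_simp; push_cast; ring
end

section
/- Merkle tree binding from collision resistance: if an adversary produces a root rt, an index i, two distinct values v ≠ v', and authentication paths π, π' such that MT.Verify(π, v, rt) = 1 and MT.Verify(π', v', rt) = 1 for the same index i, then one can extract a collision of the underlying hash function. -/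
/-- Merkle authentication-path verification: hash the leaf up along the path,
where each step supplies a sibling value and a direction bit, and compare the
result with the root. -/
def mtVerify {α : Type*} (h : α → α → α) (leaf : α) (path : List (Bool × α))
    (rt : α) : Prop :=
  path.foldl (fun acc p => if p.1 then h p.2 acc else h acc p.2) leaf = rt

/-- Merkle tree binding from collision resistance: if two distinct values verify
against the same root at the same index (i.e. with the same direction bits),
then one can extract a collision of the underlying hash function. -/
theorem stmt14 {α : Type*} (h : α → α → α) (rt : α) (v v' : α)
    (π π' : List (Bool × α)) (hidx : π.map Prod.fst = π'.map Prod.fst)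
    (hv : mtVerify h v π rt) (hv' : mtVerify h v' π' rt) (hne : v ≠ v') :
    ∃ a b a' b', (a, b) ≠ (a', b') ∧ h a b = h a' b' := by
  induction π generalizing π' v v' rt with
  | nil =>
    cases π' with
    | nil => simp [mtVerify] at hv hv'; exact absurd (hv.trans hv'.symm) hne
    | cons p l => simp at hidx
  | cons p l ih =>
    cases π' with
    | nil => simp at hidx
    | cons q m =>
      obtain ⟨d, s⟩ := p
      obtain ⟨d', s'⟩ := q
      simp at hidx
      obtain ⟨hd, hrest⟩ := hidx
      subst hd
      simp [mtVerify] at hv hv'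
      set w := if d then h s v else h v s with hw
      set w' := if d then h s' v' else h v' s' with hw'
      by_cases hww : w = w'
      · cases d with
        | false =>
          simp at hw hw'
          exact ⟨v, s, v', s', by simp [hne], by rw [← hw, ← hw', hww]⟩
        | true =>
          simp at hw hw'
          exact ⟨s, v, s', v', by simp [hne], by rw [← hw, ← hw', hww]⟩
      · exact ih rt w w' m hrest hv hv' hww
end

section
/- Completeness of the distributed sumcheck protocol: if all N machines honestly compute f_j^{(i)} and the master honestly aggregates f_j = Σ_i f_j^{(i)} in rounds 1 through ℓ-n, constructs f'(x) = f(r, x) for the handoff, and runs the standard sumcheck on f' in the last n rounds, then all verifier checks pass for any random challenges, and the final claim equals f(r_1,…,r_ℓ). -/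
set_option maxHeartbeats 1000000


open MvPolynomial

namespace Stmt15Aux

variable {F : Type*} [CommSemiring F]

/-- boolean to field element -/
def bit (c : Bool) : F := if c then 1 else 0

@[simp] lemma bit_true : (bit true : F) = 1 := rfl
@[simp] lemma bit_false : (bit false : F) = 0 := rfl

/-- bits of a number: equivalence with boolean tuples -/
def eBits (n : ℕ) : Fin (2^n) ≃ (Fin n → Bool) :=
  finFunctionFinEquiv.symm.trans (Equiv.piCongrRight fun _ => finTwoEquiv)

lemma eBits_apply (n : ℕ) (i : Fin (2^n)) (k : Fin n) :
    eBits n i k = Nat.testBit i.val k.val := by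
  have h := finFunctionFinEquiv_symm_apply_val i k
  rw [Nat.testBit_eq_decide_div_mod_eq, ← h]
  show finTwoEquiv (finFunctionFinEquiv.symm i k) = _
  generalize finFunctionFinEquiv.symm i k = v
  revert v; decide

/-- the set of boolean assignments that vanish up to index `t` -/
def A (L t : ℕ) : Finset (Fin L → Bool) :=
  Finset.univ.filter (fun b => ∀ k : Fin L, k.val ≤ t → b k = false)

lemma mem_A {L t : ℕ} {b : Fin L → Bool} :
    b ∈ A L t ↔ ∀ k : Fin L, k.val ≤ t → b k = false := by
  simp [A]

/-- partial evaluation point -/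
def pt {L : ℕ} (r : Fin L → F) (t : ℕ) (x : F) (b : Fin L → Bool) : Fin L → F :=
  fun k => if k.val < t then r k else if k.val = t then x else bit (b k)

/-- the sum over boolean points of the last variables -/
noncomputable def Q {L : ℕ} (f : MvPolynomial (Fin L) F) (r : Fin L → F) (t : ℕ) (x : F) : F :=
  ∑ b ∈ A L t, eval (pt r t x b) f

lemma pt_self {L : ℕ} (r : Fin L → F) (a : Fin L) (b : Fin L → Bool) :
    pt r a.val (r a) b = fun k => if k.val ≤ a.val then r k else bit (b k) := by
  funext k
  simp only [pt]
  rcases lt_trichotomy k.val a.val with h | h | h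
  · rw [if_pos h, if_pos (le_of_lt h)]
  · rw [if_neg (by omega), if_pos h, if_pos (le_of_eq h)]
    have hk : k = a := Fin.ext h
    rw [hk]
  · rw [if_neg (by omega), if_neg (by omega), if_neg (by omega)]

lemma Q_step {L : ℕ} (f : MvPolynomial (Fin L) F) (r : Fin L → F) (a : Fin L)
    (ht : a.val + 1 < L) :
    Q f r a.val (r a) = Q f r (a.val + 1) 0 + Q f r (a.val + 1) 1 := by
  classical
  set t := a.val with hta
  set a' : Fin L := ⟨t + 1, ht⟩ with ha'
  have ha'0 : (a' : ℕ) = t + 1 := rfl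
  unfold Q
  rw [← Finset.sum_filter_add_sum_filter_not (A L t) (fun b => b a' = false)]
  congr 1
  · -- part with `b a' = false`, equals `Q f r (t+1) 0`
    have hset : (A L t).filter (fun b => b a' = false) = A L (t + 1) := by
      ext b
      simp only [Finset.mem_filter, mem_A]
      constructor
      · rintro ⟨h1, h2⟩ k hk
        by_cases hk' : k.val = t + 1
        · have : k = a' := Fin.ext hk'
          rw [this]; exact h2
        · exact h1 k (by omega)
      · intro h
        exact ⟨fun k hk => h k (by omega), h a' (le_refl _)⟩
    rw [hset]
    apply Finset.sum_congr rfl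
    intro b hb
    refine congrArg (fun p => eval p f) ?_
    rw [pt_self r a b]
    funext k
    simp only [pt]
    rcases lt_trichotomy k.val (t + 1) with h | h | h
    · rw [if_pos (by omega), if_pos h]
    · rw [if_neg (by omega), if_neg (by omega), if_pos h,
        mem_A.mp hb k (le_of_eq h), bit_false]
    · rw [if_neg (by omega), if_neg (by omega), if_neg (by omega)]
  · -- part with `b a' = true`, equals `Q f r (t+1) 1`
    apply Finset.sum_nbij' (i := fun b => Function.update b a' false)
      (j := fun b => Function.update b a' true)
    · intro b hb
      obtain ⟨hb1, hb2⟩ := Finset.mem_filter.mp hb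
      rw [mem_A]
      intro k hk
      by_cases hka : k = a'
      · rw [hka, Function.update_self]
      · rw [Function.update_of_ne hka]
        have : k.val ≠ t + 1 := fun hh => hka (Fin.ext hh)
        exact mem_A.mp hb1 k (by omega)
    · intro b hb
      rw [Finset.mem_filter]
      refine ⟨mem_A.mpr fun k hk => ?_, by simp [Function.update_self]⟩
      have hka : k ≠ a' := by
        intro hh
        rw [hh] at hk
        omega
      rw [Function.update_of_ne hka]
      exact mem_A.mp hb k (by omega)
    · intro b hb
      obtain ⟨hb1, hb2⟩ := Finset.mem_filter.mp hb
      have hba : b a' = true := by simpa using hb2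
      rw [Function.update_idem, ← hba, Function.update_eq_self]
    · intro b hb
      have hba : b a' = false := mem_A.mp hb a' (le_refl _)
      rw [Function.update_idem, ← hba, Function.update_eq_self]
    · intro b hb
      obtain ⟨hb1, hb2⟩ := Finset.mem_filter.mp hb
      have hba : b a' = true := by simpa using hb2
      refine congrArg (fun p => eval p f) ?_
      rw [pt_self r a b]
      funext k
      simp only [pt]
      rcases lt_trichotomy k.val (t + 1) with h | h | h
      · rw [if_pos (by omega), if_pos h]
      · have hk : k = a' := Fin.ext h
        rw [if_neg (by omega), if_neg (by omega), if_pos h, hk, hba, bit_true]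
      · rw [if_neg (by omega), if_neg (by omega), if_neg (by omega),
          Function.update_of_ne (by intro hh; rw [hh] at h; omega)]

lemma Q_start {L : ℕ} (f : MvPolynomial (Fin L) F) (r : Fin L → F) (hL : 0 < L) :
    (∑ b : Fin L → Bool, eval (fun k => if b k then (1 : F) else 0) f)
      = Q f r 0 0 + Q f r 0 1 := by
  classical
  set a : Fin L := ⟨0, hL⟩ with ha
  have ha0 : (a : ℕ) = 0 := rfl
  unfold Q
  rw [← Finset.sum_filter_add_sum_filter_not Finset.univ (fun b : Fin L → Bool => b a = false)]
  congr 1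
  · have hset : Finset.univ.filter (fun b : Fin L → Bool => b a = false) = A L 0 := by
      ext b
      simp only [Finset.mem_filter, Finset.mem_univ, true_and, mem_A]
      constructor
      · intro h k hk
        have hk0 : k = a := Fin.ext (by omega)
        rw [hk0]; exact h
      · intro h
        exact h a (le_refl _)
    rw [hset]
    apply Finset.sum_congr rfl
    intro b hb
    refine congrArg (fun p => eval p f) ?_
    funext k
    show bit (b k) = pt r 0 0 b k
    simp only [pt]
    rcases Nat.eq_zero_or_pos k.val with h | h
    · rw [mem_A.mp hb k (le_of_eq h), if_neg (show ¬ (k : ℕ) < 0 by omega), if_pos h]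
      exact bit_false
    · rw [if_neg (show ¬ (k : ℕ) < 0 by omega), if_neg (show ¬ (k : ℕ) = 0 by omega)]
  · apply Finset.sum_nbij' (i := fun b => Function.update b a false)
      (j := fun b => Function.update b a true)
    · intro b hb
      obtain ⟨-, hb2⟩ := Finset.mem_filter.mp hb
      rw [mem_A]
      intro k hk
      have hka : k = a := Fin.ext (by omega)
      rw [hka, Function.update_self]
    · intro b hb
      rw [Finset.mem_filter]
      exact ⟨Finset.mem_univ _, by simp [Function.update_self]⟩
    · intro b hb
      obtain ⟨-, hb2⟩ := Finset.mem_filter.mp hb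
      have hba : b a = true := by simpa using hb2
      rw [Function.update_idem, ← hba, Function.update_eq_self]
    · intro b hb
      have hba : b a = false := mem_A.mp hb a (le_refl _)
      rw [Function.update_idem, ← hba, Function.update_eq_self]
    · intro b hb
      obtain ⟨-, hb2⟩ := Finset.mem_filter.mp hb
      have hba : b a = true := by simpa using hb2
      refine congrArg (fun p => eval p f) ?_
      funext k
      show bit (b k) = pt r 0 1 (Function.update b a false) k
      simp only [pt]
      rcases Nat.eq_zero_or_pos k.val with h | h
      · have hk : k = a := Fin.ext (by omega)
        rw [if_neg (show ¬ (k : ℕ) < 0 by omega), if_pos h, hk, hba]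
        exact bit_true
      · rw [if_neg (show ¬ (k : ℕ) < 0 by omega), if_neg (show ¬ (k : ℕ) = 0 by omega),
          Function.update_of_ne (by intro hh; rw [hh] at h; omega)]

lemma Q_last {L : ℕ} (f : MvPolynomial (Fin L) F) (r : Fin L → F) (a : Fin L)
    (hL : a.val + 1 = L) :
    Q f r a.val (r a) = eval r f := by
  unfold Q
  have hA : A L a.val = {fun _ => false} := by
    ext b
    simp only [mem_A, Finset.mem_singleton]
    constructor
    · intro h
      funext k
      exact h k (by omega)
    · rintro rfl k hk
      rfl
  rw [hA, Finset.sum_singleton]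
  refine congrArg (fun p => eval p f) ?_
  rw [pt_self r a]
  funext k
  rw [if_pos (by omega)]

/-- sum over boolean functions on a subtype equals a filtered sum of total functions -/
lemma sum_ext {α : Type*} [Fintype α] [DecidableEq α] {M : Type*} [AddCommMonoid M]
    (p : α → Prop) [DecidablePred p] (G : (α → Bool) → M) {s : Finset (α → Bool)}
    (hs : ∀ b, b ∈ s ↔ ∀ x, ¬ p x → b x = false) :
    ∑ b : {x // p x} → Bool, G (fun x => if h : p x then b ⟨x, h⟩ else false)
      = ∑ b ∈ s, G b := by
  apply Finset.sum_nbij' (i := fun b => fun x => if h : p x then b ⟨x, h⟩ else false)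
    (j := fun b => fun x : {x // p x} => b x.1)
  · intro b _
    rw [hs]
    intro x hx
    rw [dif_neg hx]
  · intro b _
    exact Finset.mem_univ _
  · intro b _
    funext x
    simp only
    rw [dif_pos x.2]
  · intro b hb
    rw [hs] at hb
    funext x
    simp only
    by_cases h : p x
    · rw [dif_pos h]
    · rw [dif_neg h]
      exact (hb x h).symm
  · intro b _
    rfl

end Stmt15Aux

open Stmt15Aux

/-- Completeness of the distributed sumcheck protocol on a data-parallel circuit
with `N = 2^(n+1)` machines and `ℓ = (m+1) + (n+1)` variables: if every machine
honestly computes its round polynomials `mj i j`, the master aggregates them by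
summation (`agg j = Σ_i mj i j`) during the first `m+1` rounds, forms the
handoff value `H' = Σ_i f^{(i)}(r[1 : m+1])`, and runs the standard sumcheck on
`f'(x) = f(r[1 : m+1], x)` in the last `n+1` rounds (round polynomials `g`),
then all of the verifier's checks pass, for any challenges `r`, and the final
claim equals `f(r₁, …, r_ℓ)`. -/
theorem stmt15 {F : Type*} [Field F] {m n : ℕ}
    (f : MvPolynomial (Fin ((m + 1) + (n + 1))) F) (r : Fin ((m + 1) + (n + 1)) → F)
    (rA : Fin (m + 1) → F) (hrA : rA = fun k => r (Fin.castAdd (n + 1) k))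
    (rB : Fin (n + 1) → F) (hrB : rB = fun k => r (Fin.natAdd (m + 1) k))
    (H : F) (hH : H = ∑ b : Fin ((m + 1) + (n + 1)) → Bool,
      eval (fun k => if b k then (1 : F) else 0) f)
    -- honest round polynomial of machine `i` in round `j` of the first phase
    (mj : Fin (2 ^ (n + 1)) → Fin (m + 1) → F → F)
    (hmj : ∀ i j x, mj i j x =
      ∑ b : {k : Fin (m + 1) // j < k} → Bool,
        eval (Fin.addCases
          (fun k => if h1 : k < j then rA k else if h2 : k = j then x
            else if b ⟨k, lt_of_le_of_ne (not_lt.mp h1) (Ne.symm h2)⟩ then (1 : F) else 0)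
          (fun k => if Nat.testBit i.val k.val then (1 : F) else 0)) f)
    -- aggregated round polynomials of the first phase
    (agg : Fin (m + 1) → F → F) (hagg : ∀ j x, agg j x = ∑ i : Fin (2 ^ (n + 1)), mj i j x)
    -- handoff value
    (H' : F) (hH' : H' = ∑ i : Fin (2 ^ (n + 1)),
      eval (Fin.addCases rA (fun k => if Nat.testBit i.val k.val then (1 : F) else 0)) f)
    -- honest round polynomials of the last phase, i.e. of the sumcheck on f'(x) = f(rA, x)
    (g : Fin (n + 1) → F → F)
    (hg : ∀ j x, g j x =
      ∑ b : {k : Fin (n + 1) // j < k} → Bool,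
        eval (Fin.addCases rA
          (fun k => if h1 : k < j then rB k else if h2 : k = j then x
            else if b ⟨k, lt_of_le_of_ne (not_lt.mp h1) (Ne.symm h2)⟩ then (1 : F) else 0)) f) :
    H = agg 0 0 + agg 0 1 ∧
    (∀ j : Fin m, agg j.castSucc (rA j.castSucc) = agg j.succ 0 + agg j.succ 1) ∧
    agg (Fin.last m) (rA (Fin.last m)) = H' ∧
    H' = g 0 0 + g 0 1 ∧
    (∀ j : Fin n, g j.castSucc (rB j.castSucc) = g j.succ 0 + g j.succ 1) ∧
    g (Fin.last n) (rB (Fin.last n)) = eval r f := by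
  classical
  subst hrA hrB hH hH'
  -- bridge for the last-phase round polynomials
  have hgQ : ∀ (j : Fin (n + 1)) (x : F), g j x = Q f r (m + 1 + j.val) x := by
    intro j x
    rw [hg j x]
    calc
      ∑ b : {k : Fin (n + 1) // j < k} → Bool,
        eval (Fin.addCases (fun k => r (Fin.castAdd (n + 1) k))
          (fun k => if h1 : k < j then r (Fin.natAdd (m + 1) k) else if h2 : k = j then x
            else if b ⟨k, lt_of_le_of_ne (not_lt.mp h1) (Ne.symm h2)⟩ then (1 : F) else 0)) f
        = ∑ b : {k : Fin (n + 1) // j < k} → Bool,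
            eval (Fin.addCases (fun k => r (Fin.castAdd (n + 1) k))
              (fun k => if k < j then r (Fin.natAdd (m + 1) k) else if k = j then x
                else bit (if h : j < k then b ⟨k, h⟩ else false))) f := by
          apply Finset.sum_congr rfl
          intro b _
          refine congrArg (fun p => eval p f) ?_
          funext k
          induction k using Fin.addCases with
          | left kL => simp only [Fin.addCases_left]
          | right kR =>
            simp only [Fin.addCases_right]
            rcases lt_trichotomy kR j with h | h | h
            · rw [dif_pos h, if_pos h]
            · rw [dif_neg (by simp [h]), dif_pos h, if_neg (by simp [h]), if_pos h]
            · rw [dif_neg (lt_asymm h), dif_neg (ne_of_gt h), if_neg (lt_asymm h),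
                if_neg (ne_of_gt h), dif_pos h]
              rfl
      _ = ∑ c ∈ Finset.univ.filter
            (fun c : Fin (n + 1) → Bool => ∀ k, ¬ j < k → c k = false),
            eval (Fin.addCases (fun k => r (Fin.castAdd (n + 1) k))
              (fun k => if k < j then r (Fin.natAdd (m + 1) k) else if k = j then x
                else bit (c k))) f :=
            sum_ext (fun k => j < k)
              (fun c => eval (Fin.addCases (fun k => r (Fin.castAdd (n + 1) k))
                (fun k => if k < j then r (Fin.natAdd (m + 1) k) else if k = j then x
                  else bit (c k))) f)
              (fun b => by simp)
      _ = Q f r (m + 1 + j.val) x := by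
          unfold Q
          apply Finset.sum_nbij' (i := fun c => Fin.addCases (fun _ => false) c)
            (j := fun b => fun kR => b (Fin.natAdd (m + 1) kR))
          · intro c hc
            simp only [Finset.mem_filter, Finset.mem_univ, true_and] at hc
            rw [mem_A]
            intro k
            induction k using Fin.addCases with
            | left kL => intro _; simp only [Fin.addCases_left]
            | right kR =>
              intro hk
              simp only [Fin.coe_natAdd] at hk
              simp only [Fin.addCases_right]
              exact hc kR (by rw [Fin.lt_def]; omega)
          · intro b hb
            simp only [Finset.mem_filter, Finset.mem_univ, true_and]
            intro kR hkR
            rw [not_lt, Fin.le_def] at hkR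
            exact mem_A.mp hb _ (by simp only [Fin.coe_natAdd]; omega)
          · intro c _
            funext kR
            simp only [Fin.addCases_right]
          · intro b hb
            funext k
            induction k using Fin.addCases with
            | left kL =>
              simp only [Fin.addCases_left]
              refine (mem_A.mp hb _ ?_).symm
              simp only [Fin.coe_castAdd]
              have := kL.isLt
              omega
            | right kR => simp only [Fin.addCases_right]
          · intro c _
            refine congrArg (fun p => eval p f) ?_
            funext k
            induction k using Fin.addCases with
            | left kL =>
              simp only [Fin.addCases_left, pt, Fin.coe_castAdd]
              rw [if_pos (by have := kL.isLt; omega)]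
            | right kR =>
              simp only [Fin.addCases_right, pt, Fin.coe_natAdd]
              rcases lt_trichotomy kR j with h | h | h
              · have hv : kR.val < j.val := by rwa [Fin.lt_def] at h
                rw [if_pos h, if_pos (by omega)]
              · have hv : kR.val = j.val := by rw [h]
                rw [if_neg (by simp [h]), if_pos h, if_neg (by omega), if_pos (by omega)]
              · have hv : j.val < kR.val := by rwa [Fin.lt_def] at h
                rw [if_neg (lt_asymm h), if_neg (ne_of_gt h), if_neg (by omega),
                  if_neg (by omega)]
  -- bridge for the first-phase aggregated round polynomials
  have haggQ : ∀ (j : Fin (m + 1)) (x : F), agg j x = Q f r j.val x := by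
    intro j x
    rw [hagg j x]
    calc
      ∑ i : Fin (2 ^ (n + 1)), mj i j x
        = ∑ i : Fin (2 ^ (n + 1)), ∑ c ∈ Finset.univ.filter
            (fun c : Fin (m + 1) → Bool => ∀ k, ¬ j < k → c k = false),
            eval (Fin.addCases
              (fun k => if k < j then r (Fin.castAdd (n + 1) k) else if k = j then x
                else bit (c k))
              (fun k => bit (eBits (n + 1) i k))) f := by
          apply Finset.sum_congr rfl
          intro i _
          rw [hmj i j x]
          calc
            ∑ b : {k : Fin (m + 1) // j < k} → Bool,
              eval (Fin.addCases
                (fun k => if h1 : k < j then r (Fin.castAdd (n + 1) k) else if h2 : k = j then x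
                  else if b ⟨k, lt_of_le_of_ne (not_lt.mp h1) (Ne.symm h2)⟩ then (1 : F) else 0)
                (fun k => if Nat.testBit i.val k.val then (1 : F) else 0)) f
              = ∑ b : {k : Fin (m + 1) // j < k} → Bool,
                  eval (Fin.addCases
                    (fun k => if k < j then r (Fin.castAdd (n + 1) k) else if k = j then x
                      else bit (if h : j < k then b ⟨k, h⟩ else false))
                    (fun k => bit (eBits (n + 1) i k))) f := by
                apply Finset.sum_congr rfl
                intro b _
                refine congrArg (fun p => eval p f) ?_
                funext k
                induction k using Fin.addCases with
                | left kL =>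
                  simp only [Fin.addCases_left]
                  rcases lt_trichotomy kL j with h | h | h
                  · rw [dif_pos h, if_pos h]
                  · rw [dif_neg (by simp [h]), dif_pos h, if_neg (by simp [h]), if_pos h]
                  · rw [dif_neg (lt_asymm h), dif_neg (ne_of_gt h), if_neg (lt_asymm h),
                      if_neg (ne_of_gt h), dif_pos h]
                    rfl
                | right kR =>
                  simp only [Fin.addCases_right, eBits_apply]
                  rfl
            _ = _ := sum_ext (fun k => j < k)
                  (fun c => eval (Fin.addCases
                    (fun k => if k < j then r (Fin.castAdd (n + 1) k) else if k = j then x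
                      else bit (c k))
                    (fun k => bit (eBits (n + 1) i k))) f)
                  (fun b => by simp)
      _ = ∑ p ∈ Finset.univ ×ˢ Finset.univ.filter
            (fun c : Fin (m + 1) → Bool => ∀ k, ¬ j < k → c k = false),
            eval (Fin.addCases
              (fun k => if k < j then r (Fin.castAdd (n + 1) k) else if k = j then x
                else bit (p.2 k))
              (fun k => bit (eBits (n + 1) p.1 k))) f := by
          rw [Finset.sum_product]
      _ = Q f r j.val x := by
          unfold Q
          apply Finset.sum_nbij'
            (i := fun p => Fin.addCases p.2 (eBits (n + 1) p.1))
            (j := fun b => ((eBits (n + 1)).symm (fun kR => b (Fin.natAdd (m + 1) kR)),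
              fun kL => b (Fin.castAdd (n + 1) kL)))
          · intro p hp
            simp only [Finset.mem_product, Finset.mem_filter, Finset.mem_univ, true_and] at hp
            rw [mem_A]
            intro k
            induction k using Fin.addCases with
            | left kL =>
              intro hk
              simp only [Fin.coe_castAdd] at hk
              simp only [Fin.addCases_left]
              exact hp kL (by rw [not_lt, Fin.le_def]; omega)
            | right kR =>
              intro hk
              simp only [Fin.coe_natAdd] at hk
              have := j.isLt
              omega
          · intro b hb
            simp only [Finset.mem_product, Finset.mem_filter, Finset.mem_univ, true_and]
            intro kL hkL
            rw [not_lt, Fin.le_def] at hkL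
            exact mem_A.mp hb _ (by simp only [Fin.coe_castAdd]; omega)
          · intro p hp
            have h1 : (fun kR => Fin.addCases (motive := fun _ => Bool)
                p.2 (eBits (n + 1) p.1) (Fin.natAdd (m + 1) kR)) = eBits (n + 1) p.1 := by
              funext kR
              simp only [Fin.addCases_right]
            rw [Prod.ext_iff]
            constructor
            · simp only [h1, Equiv.symm_apply_apply]
            · funext kL
              simp only [Fin.addCases_left]
          · intro b hb
            simp only [Equiv.apply_symm_apply]
            funext k
            induction k using Fin.addCases with
            | left kL => simp only [Fin.addCases_left]
            | right kR => simp only [Fin.addCases_right]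
          · intro p hp
            refine congrArg (fun p => eval p f) ?_
            funext k
            induction k using Fin.addCases with
            | left kL =>
              simp only [Fin.addCases_left, pt, Fin.coe_castAdd]
              rcases lt_trichotomy kL j with h | h | h
              · have hv : kL.val < j.val := by rwa [Fin.lt_def] at h
                rw [if_pos h, if_pos (by omega)]
              · have hv : kL.val = j.val := by rw [h]
                rw [if_neg (by simp [h]), if_pos h, if_neg (by omega), if_pos (by omega)]
              · have hv : j.val < kL.val := by rwa [Fin.lt_def] at h
                rw [if_neg (lt_asymm h), if_neg (ne_of_gt h), if_neg (by omega),
                  if_neg (by omega)]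
            | right kR =>
              simp only [Fin.addCases_right, pt, Fin.coe_natAdd]
              have := j.isLt
              rw [if_neg (by omega), if_neg (by omega)]
  -- bridge for the handoff value
  have hH'Q : (∑ i : Fin (2 ^ (n + 1)),
      eval (Fin.addCases (fun k => r (Fin.castAdd (n + 1) k))
        (fun k => if Nat.testBit i.val k.val then (1 : F) else 0)) f)
      = Q f r (Fin.castAdd (n + 1) (Fin.last m)).val (r (Fin.castAdd (n + 1) (Fin.last m))) := by
    have hval : (Fin.castAdd (n + 1) (Fin.last m)).val = m := by simp
    unfold Q
    apply Finset.sum_nbij'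
      (i := fun i => Fin.addCases (fun _ => false) (eBits (n + 1) i))
      (j := fun b => (eBits (n + 1)).symm (fun kR => b (Fin.natAdd (m + 1) kR)))
    · intro i _
      rw [mem_A]
      intro k
      induction k using Fin.addCases with
      | left kL => intro _; simp only [Fin.addCases_left]
      | right kR =>
        intro hk
        simp only [Fin.coe_natAdd] at hk
        omega
    · intro b _
      exact Finset.mem_univ _
    · intro i _
      have h1 : (fun kR => Fin.addCases (motive := fun _ => Bool)
          (fun _ => false) (eBits (n + 1) i) (Fin.natAdd (m + 1) kR)) = eBits (n + 1) i := by
        funext kR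
        simp only [Fin.addCases_right]
      rw [h1, Equiv.symm_apply_apply]
    · intro b hb
      rw [Equiv.apply_symm_apply]
      funext k
      induction k using Fin.addCases with
      | left kL =>
        simp only [Fin.addCases_left]
        refine (mem_A.mp hb _ ?_).symm
        simp only [Fin.coe_castAdd, Fin.val_last]
        have := kL.isLt
        omega
      | right kR => simp only [Fin.addCases_right]
    · intro i _
      refine congrArg (fun p => eval p f) ?_
      rw [pt_self r (Fin.castAdd (n + 1) (Fin.last m))]
      funext k
      induction k using Fin.addCases with
      | left kL =>
        simp only [Fin.addCases_left, Fin.coe_castAdd, Fin.val_last]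
        rw [if_pos (by have := kL.isLt; omega)]
      | right kR =>
        simp only [Fin.addCases_right, Fin.coe_natAdd, Fin.coe_castAdd, Fin.val_last]
        rw [if_neg (show ¬ (m + 1 + (kR : ℕ) ≤ m) by omega), eBits_apply]
        rfl
  refine ⟨?_, ?_, ?_, ?_, ?_, ?_⟩
  · -- H = agg 0 0 + agg 0 1
    rw [haggQ 0 0, haggQ 0 1]
    exact Q_start f r (by omega)
  · -- first-phase rounds
    intro j
    rw [haggQ, haggQ, haggQ]
    exact Q_step f r (Fin.castAdd (n + 1) j.castSucc)
      (by simp only [Fin.coe_castAdd, Fin.coe_castSucc]; have := j.isLt; omega)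
  · -- handoff check
    rw [haggQ]
    exact hH'Q.symm
  · -- H' = g 0 0 + g 0 1
    rw [hgQ 0 0, hgQ 0 1, hH'Q]
    exact Q_step f r (Fin.castAdd (n + 1) (Fin.last m))
      (by simp only [Fin.coe_castAdd, Fin.val_last]; omega)
  · -- last-phase rounds
    intro j
    rw [hgQ, hgQ, hgQ]
    exact Q_step f r (Fin.natAdd (m + 1) j.castSucc)
      (by simp only [Fin.coe_natAdd, Fin.coe_castSucc]; have := j.isLt; omega)
  · -- final check
    rw [hgQ]
    exact Q_last f r (Fin.natAdd (m + 1) (Fin.last n))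
      (by simp only [Fin.coe_natAdd, Fin.val_last]; omega)
end
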